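/- arXiv:math/0412187 — 2 statements merged into one kernel-verified Lean document; each statement's English description precedes it below -/
import Mathlib

section
/- Let p > q > 1 be coprime positive integers and let a₁, …, a_n be the partial quotients of the continued fraction expansion of p/q. If every aᵢ satisfies aᵢ ≤ 5, then a₁ + ⋯ + a_n ≤ 3·log₂(p). -/
/-- Value of the continued fraction a₁ + 1/(a₂ + 1/(⋯ + 1/a_n)). -/
def cf : List ℕ → ℚ
  | [] => 0
  | [a] => (a : ℚ)
  | a :: rest => (a : ℚ) + 1 / cf rest

/-- numerator/denominator pair -/
def nd : List ℕ → ℕ × ℕ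
  | [] => (1, 0)
  | a :: rest => (a * (nd rest).1 + (nd rest).2, (nd rest).1)

theorem nd_lem : ∀ l : List ℕ, l ≠ [] → (∀ x ∈ l, 0 < x) →
    1 ≤ (nd l).2 ∧ (nd l).2 ≤ (nd l).1 ∧ Nat.Coprime (nd l).1 (nd l).2 ∧
      cf l = ((nd l).1 : ℚ) / ((nd l).2 : ℚ)
  | [a], _, hpos => by
      have ha : 0 < a := hpos a (by simp)
      simp [nd, cf]
      omega
  | a :: b :: rest, _, hpos => by
      have ih := nd_lem (b :: rest) (by simp) (fun x hx => hpos x (by simp [hx]))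
      obtain ⟨h1, h2, h3, h4⟩ := ih
      set P := (nd (b :: rest)).1 with hP
      set Q := (nd (b :: rest)).2 with hQ
      have hP1 : 1 ≤ P := le_trans h1 h2
      have hndc : nd (a :: b :: rest) = (a * P + Q, P) := rfl
      refine ⟨?_, ?_, ?_, ?_⟩
      · rw [hndc]; exact hP1
      · rw [hndc]
        have ha : 0 < a := hpos a (by simp)
        simp only
        nlinarith
      · rw [hndc]
        simp only
        rw [Nat.add_comm]
        exact (Nat.coprime_add_mul_right_left Q P a).mpr h3.symm
      · rw [hndc]
        have hcf2 : cf (a :: b :: rest) = (a : ℚ) + 1 / cf (b :: rest) := rfl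
        rw [hcf2, h4]
        have hPne : (P : ℚ) ≠ 0 := by exact_mod_cast (by omega : P ≠ 0)
        have hQne : (Q : ℚ) ≠ 0 := by exact_mod_cast (by omega : Q ≠ 0)
        simp only
        field_simp
        norm_cast

theorem key_ineq : ∀ l : List ℕ, l ≠ [] → l ≠ [1] → (∀ x ∈ l, 0 < x) → (∀ x ∈ l, x ≤ 5) →
    2 ^ (l.sum + 1) ≤ (nd l).1 ^ 2 * ((nd l).1 + (nd l).2)
  | [a], _, hne1, hpos, hB => by
      have ha : 0 < a := hpos a (by simp)
      have ha5 : a ≤ 5 := hB a (by simp)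
      have ha1 : a ≠ 1 := by intro h; apply hne1; rw [h]
      have hnd : nd [a] = (a, 1) := by simp [nd]
      rw [hnd]
      simp only [List.sum_cons, List.sum_nil]
      interval_cases a <;> first | exact absurd rfl ha1 | norm_num
  | a :: b :: rest, _, _, hpos, hB => by
      have ha : 0 < a := hpos a (by simp)
      have ha5 : a ≤ 5 := hB a (by simp)
      by_cases hb : b = 1 ∧ rest = []
      · obtain ⟨hb1, hre⟩ := hb
        subst hb1; subst hre
        have hnd : nd [a, 1] = (a + 1, 1) := by simp [nd]
        rw [hnd]
        simp only [List.sum_cons, List.sum_nil]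
        interval_cases a <;> norm_num
      · have hne1 : b :: rest ≠ [1] := by
          intro h
          apply hb
          injection h with h1 h2
          exact ⟨h1, h2⟩
        have ih := key_ineq (b :: rest) (by simp) hne1
          (fun x hx => hpos x (by simp [hx])) (fun x hx => hB x (by simp [hx]))
        have hlem := nd_lem (b :: rest) (by simp) (fun x hx => hpos x (by simp [hx]))
        obtain ⟨h1, h2, _, _⟩ := hlem
        set P := (nd (b :: rest)).1 with hP
        set Q := (nd (b :: rest)).2 with hQ
        have hndc : nd (a :: b :: rest) = (a * P + Q, P) := rfl
        rw [hndc]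
        simp only [List.sum_cons]
        have hsum : a + (b + rest.sum) + 1 = a + ((b + rest.sum) + 1) := by ring
        rw [hsum, pow_add]
        have hstep : 2 ^ a * (P ^ 2 * (P + Q)) ≤ (a * P + Q) ^ 2 * ((a * P + Q) + P) := by
          interval_cases a <;> nlinarith [h1, h2, sq_nonneg P, sq_nonneg Q]
        calc 2 ^ a * 2 ^ (b + rest.sum + 1) ≤ 2 ^ a * (P ^ 2 * (P + Q)) := by
              exact Nat.mul_le_mul_left _ ih
          _ ≤ _ := hstep

theorem stmt_7 (p q : ℕ) (l : List ℕ) (hl : l ≠ [])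
    (hpos : ∀ a ∈ l, 0 < a) (hB : ∀ a ∈ l, a ≤ 5)
    (hq : 1 < q) (hpq : q < p) (hcop : Nat.Coprime p q)
    (hcf : (p : ℚ) / q = cf l) :
    (l.sum : ℝ) ≤ 3 * Real.logb 2 p := by
  -- l ≠ [1]
  have hl1 : l ≠ [1] := by
    intro h
    subst h
    have : cf [1] = 1 := by simp [cf]
    rw [this] at hcf
    have hq0 : (q : ℚ) ≠ 0 := by positivity
    have : (p : ℚ) = q := by field_simp at hcf; exact_mod_cast hcf
    have : p = q := by exact_mod_cast this
    omega
  obtain ⟨h1, h2, h3, h4⟩ := nd_lem l hl hpos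
  set N := (nd l).1 with hN
  set Q := (nd l).2 with hQ
  have hq0 : 0 < q := by omega
  have hp0 : 0 < p := by omega
  have hcross : p * Q = N * q := by
    rw [h4] at hcf
    have : (p : ℚ) * Q = N * q := by
      rw [div_eq_div_iff (by positivity) (by exact_mod_cast (by omega : Q ≠ 0))] at hcf
      exact_mod_cast hcf
    exact_mod_cast this
  have hpN : p = N := by
    have hd1 : p ∣ N := by
      have : p ∣ N * q := ⟨Q, hcross.symm⟩
      exact (Nat.Coprime.dvd_of_dvd_mul_right hcop this)
    have hd2 : N ∣ p := by
      have : N ∣ p * Q := ⟨q, hcross⟩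
      exact (Nat.Coprime.dvd_of_dvd_mul_right h3 this)
    exact Nat.dvd_antisymm hd1 hd2
  have hqQ : q = Q := by
    have := hcross
    rw [hpN] at this
    have hN0 : 0 < N := by omega
    exact (Nat.eq_of_mul_eq_mul_left hN0 (by linarith [this])).symm
  have hkey := key_ineq l hl hl1 hpos hB
  rw [← hN, ← hQ, ← hpN, ← hqQ] at hkey
  -- 2 ^ l.sum ≤ p ^ 3 in ℕ
  have hnat : 2 ^ l.sum ≤ p ^ 3 := by
    have h2x : 2 * 2 ^ l.sum ≤ p ^ 2 * (p + q) := by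
      rw [pow_succ] at hkey
      linarith [hkey]
    nlinarith [hq, hpq, sq_nonneg p]
  have hreal : (2 : ℝ) ^ l.sum ≤ (p : ℝ) ^ 3 := by exact_mod_cast hnat
  have hp1 : (1 : ℝ) < p := by exact_mod_cast (by omega : 1 < p)
  have := Real.logb_le_logb_of_le (by norm_num : (1:ℝ) < 2) (by positivity) hreal
  rw [Real.logb_pow, Real.logb_pow, Real.logb_self_eq_one (by norm_num)] at this
  simpa using this
end

section
/- Let X be an m×n integer matrix obtained as a block matrix with upper block an integer matrix (Y Z) having t rows each of L¹-norm exactly 3, and lower block (2·I_h 0) where I_h is the h×h identity. If X has a square submatrix X' with det(X') ≠ 0 and det(X') divisible by 2^l·(2m+1) for some l ≥ 0 and m ≥ 0, then 2m+1 ≤ 3^t. -/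
/-- The `L¹` Hadamard-type bound: `|det A| ≤ ∏ i, ∑ j, |A i j|`. -/
lemma abs_det_le_prod_sum_abs {k : ℕ} (A : Matrix (Fin k) (Fin k) ℤ) :
    |A.det| ≤ ∏ i, ∑ j, |A i j| := by
  rw [Matrix.det_apply']
  refine (Finset.abs_sum_le_sum_abs _ _).trans ?_
  simp only [Int.cast_id]
  have h1 : ∀ σ : Equiv.Perm (Fin k),
      |(Equiv.Perm.sign σ : ℤ) * ∏ i, A (σ i) i| = ∏ i, |A i (σ⁻¹ i)| := by
    intro σ
    have hs : |((Equiv.Perm.sign σ : ℤˣ) : ℤ)| = 1 := by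
      rcases Int.units_eq_one_or (Equiv.Perm.sign σ : ℤˣ) with hu | hu <;> rw [hu] <;> simp
    rw [abs_mul, hs, one_mul, Finset.abs_prod]
    calc ∏ i, |A (σ i) i| = ∏ i, |A (σ i) (σ⁻¹ (σ i))| := by simp
    _ = ∏ i, |A i (σ⁻¹ i)| := Equiv.prod_comp σ (fun j => |A j (σ⁻¹ j)|)
  rw [Finset.sum_congr rfl fun σ _ => h1 σ]
  have h2 : ∑ σ : Equiv.Perm (Fin k), ∏ i, |A i (σ⁻¹ i)|
      = ∑ f ∈ Finset.univ.image (fun σ : Equiv.Perm (Fin k) => ⇑σ⁻¹), ∏ i, |A i (f i)| := by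
    rw [Finset.sum_image]
    intro a _ b _ hab
    have : a⁻¹ = b⁻¹ := Equiv.coe_fn_injective hab
    simpa using congrArg Inv.inv this
  rw [h2]
  have h3 : ∑ f ∈ Finset.univ.image (fun σ : Equiv.Perm (Fin k) => ⇑σ⁻¹), ∏ i, |A i (f i)|
      ≤ ∑ f : Fin k → Fin k, ∏ i, |A i (f i)| := by
    refine Finset.sum_le_sum_of_subset_of_nonneg (Finset.subset_univ _) ?_
    intro f _ _
    exact Finset.prod_nonneg fun i _ => abs_nonneg _
  refine h3.trans_eq ?_
  rw [Finset.prod_univ_sum, Fintype.piFinset_univ]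

theorem stmt_14 (t h n : ℕ) (hn : h ≤ n) (X : Matrix (Fin (t + h)) (Fin n) ℤ)
    (hupper : ∀ i : Fin (t + h), (i : ℕ) < t → ∑ j, |X i j| = 3)
    (hlower : ∀ i : Fin (t + h), ∀ hi : t ≤ (i : ℕ), ∀ j : Fin n,
      X i j = if (j : ℕ) = (i : ℕ) - t then 2 else 0)
    (l m k : ℕ) (row : Fin k → Fin (t + h)) (col : Fin k → Fin n)
    (hrow : Function.Injective row) (hcol : Function.Injective col)
    (hdet : (Matrix.of fun i j => X (row i) (col j)).det ≠ 0)
    (hdvd : ((2 : ℤ) ^ l * (2 * m + 1)) ∣ (Matrix.of fun i j => X (row i) (col j)).det) :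
    2 * m + 1 ≤ 3 ^ t := by
  set M : Matrix (Fin k) (Fin k) ℤ := Matrix.of fun i j => X (row i) (col j) with hM
  set c : Fin k → ℤ := fun i => if t ≤ (row i : ℕ) then 2 else 1 with hc
  set N : Matrix (Fin k) (Fin k) ℤ := Matrix.of fun i j =>
    if t ≤ (row i : ℕ) then (if (col j : ℕ) = (row i : ℕ) - t then 1 else 0)
    else X (row i) (col j) with hN
  have hMN : M = Matrix.of fun i j => c i * N i j := by
    ext i j
    simp only [hM, hc, hN, Matrix.of_apply]
    by_cases hi : t ≤ (row i : ℕ)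
    · rw [hlower (row i) hi (col j)]
      simp only [hi, if_true]
      split <;> ring
    · simp [hi]
  have hdetMN : M.det = (∏ i, c i) * N.det := by rw [hMN, Matrix.det_mul_column]
  -- 2m+1 divides det N
  set q : ℤ := 2 * (m : ℤ) + 1 with hq
  have hqdvdM : q ∣ M.det := dvd_trans (dvd_mul_left q (2 ^ l)) hdvd
  have hcop : IsCoprime q (∏ i, c i) := by
    refine IsCoprime.prod_right fun i _ => ?_
    simp only [hc]
    split
    · exact ⟨1, -(m : ℤ), by rw [hq]; ring⟩
    · exact isCoprime_one_right
  have hqdvdN : q ∣ N.det := by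
    rw [hdetMN] at hqdvdM
    exact hcop.dvd_of_dvd_mul_left hqdvdM
  have hNne : N.det ≠ 0 := by
    intro h0
    rw [hdetMN, h0, mul_zero] at hdet
    exact hdet rfl
  have hqle : q ≤ |N.det| := Int.le_of_dvd (abs_pos.mpr hNne) ((dvd_abs _ _).mpr hqdvdN)
  -- bound |det N|
  have hbound : |N.det| ≤ ∏ i, ∑ j, |N i j| := abs_det_le_prod_sum_abs N
  have hrowsum : ∀ i : Fin k, ∑ j, |N i j| ≤ if t ≤ (row i : ℕ) then 1 else 3 := by
    intro i
    by_cases hi : t ≤ (row i : ℕ)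
    · simp only [hN, Matrix.of_apply, hi, if_true]
      calc ∑ j, |if (col j : ℕ) = (row i : ℕ) - t then (1:ℤ) else 0|
          = ∑ j : Fin k, if (col j : ℕ) = (row i : ℕ) - t then (1:ℤ) else 0 := by
            refine Finset.sum_congr rfl fun j _ => ?_
            split <;> simp
        _ = ((Finset.univ.filter fun j : Fin k => (col j : ℕ) = (row i : ℕ) - t).card : ℤ) := by
            rw [Finset.sum_boole]
        _ ≤ 1 := by
            have hcard : (Finset.univ.filter fun j : Fin k =>
                (col j : ℕ) = (row i : ℕ) - t).card ≤ 1 := by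
              refine Finset.card_le_one.mpr fun a ha b hb => ?_
              simp only [Finset.mem_filter] at ha hb
              exact hcol (Fin.val_injective (ha.2.trans hb.2.symm))
            exact_mod_cast hcard
    · simp only [hN, Matrix.of_apply, hi, if_false]
      have h1 : ∑ j ∈ Finset.univ.image col, |X (row i) j|
          = ∑ j : Fin k, |X (row i) (col j)| :=
        Finset.sum_image fun a _ b _ hab => hcol hab
      have h2 : ∑ j ∈ Finset.univ.image col, |X (row i) j| ≤ ∑ j : Fin n, |X (row i) j| :=
        Finset.sum_le_sum_of_subset_of_nonneg (Finset.subset_univ _)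
          (fun _ _ _ => abs_nonneg _)
      rw [h1, hupper (row i) (lt_of_not_ge hi)] at h2
      exact h2
  set S : Finset (Fin k) := Finset.univ.filter fun i => ¬ t ≤ (row i : ℕ) with hS
  have hprod : ∏ i, ∑ j, |N i j| ≤ ∏ i, (if t ≤ (row i : ℕ) then (1:ℤ) else 3) :=
    Finset.prod_le_prod (fun i _ => Finset.sum_nonneg fun j _ => abs_nonneg _)
      (fun i _ => hrowsum i)
  have hprodval : ∏ i, (if t ≤ (row i : ℕ) then (1:ℤ) else 3) = 3 ^ S.card := by
    rw [Finset.prod_ite, Finset.prod_const, Finset.prod_const, one_pow, one_mul]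
  have hScard : S.card ≤ t := by
    have := Finset.card_le_card_of_injOn (s := S) (f := fun i : Fin k => (row i : ℕ))
      (t := Finset.range t)
      (fun i hi => by
        rw [hS, Finset.mem_coe, Finset.mem_filter] at hi
        have hlt : (row i : ℕ) < t := by omega
        simpa using Finset.mem_range.mpr hlt)
      (fun a _ b _ hab => hrow (Fin.val_injective hab))
    simpa using this
  have hfinal : q ≤ (3:ℤ) ^ t := by
    calc q ≤ |N.det| := hqle
      _ ≤ ∏ i, ∑ j, |N i j| := hbound
      _ ≤ 3 ^ S.card := hprod.trans_eq hprodval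
      _ ≤ (3:ℤ) ^ t := pow_le_pow_right₀ (by norm_num) hScard
  have : ((2 * m + 1 : ℕ) : ℤ) ≤ ((3 ^ t : ℕ) : ℤ) := by push_cast; push_cast [hq] at hfinal; linarith
  exact_mod_cast this
end
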